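/- arXiv:1008.0816 — 2 statements merged into one kernel-verified Lean document; each statement's English description precedes it below -/
import Mathlib

section
/- Let n ≥ 8 and let φ : SL_n(ℂ) → SU_n be a homotopy equivalence which preserves commutativity and satisfies φ(Z(SL_n(ℂ))) = Z(SU_n). If Q ∈ Her⁺(ℂⁿ) and L, L' ∈ ℙ(ℂⁿ) are such that φ(σ_Q^L) ⊆ σ_{Q₀}^{L'}, then φ(Stab_{SU(Q)}(L)) ⊆ Stab_{SU_n}(L'). -/
open scoped ComplexOrder

/-- The special linear group `SL_n(ℂ)`, as the subspace of `n × n` complex matrices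
of determinant `1`. -/
abbrev SL (n : ℕ) : Type := {A : Matrix (Fin n) (Fin n) ℂ // A.det = 1}

/-- The Hermitian form associated to a matrix `M`: `(u, v) ↦ conj(u)ᵀ M v`.  For `M = 1`
this is the standard Hermitian form `Q₀((uᵢ),(vᵢ)) = Σᵢ conj(uᵢ)·vᵢ`. -/
noncomputable def form {n : ℕ} (M : Matrix (Fin n) (Fin n) ℂ) (u v : Fin n → ℂ) : ℂ :=
  dotProduct (star u) (M.mulVec v)

/-- The subgroup `SU(Q) ⊆ SL_n(ℂ)` of matrices preserving the Hermitian form of `M`.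
For `M = 1` this is the special unitary group `SU_n`. -/
def SUQ {n : ℕ} (M : Matrix (Fin n) (Fin n) ℂ) : Set (SL n) :=
  {A | ∀ u v : Fin n → ℂ, form M (A.val.mulVec u) (A.val.mulVec v) = form M u v}

/-- The center of `SL_n(ℂ)` (equal to the center of `SU_n`): scalar matrices `ζ • 1`
with `ζ` an `n`-th root of unity. -/
def centerSL (n : ℕ) : Set (SL n) :=
  {A | ∃ ζ : ℂ, ζ ^ n = 1 ∧ A.val = ζ • (1 : Matrix (Fin n) (Fin n) ℂ)}

/-- The `Q`-orthogonal complement of a subspace `W`, for the Hermitian form of `M`. -/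
def perp {n : ℕ} (M : Matrix (Fin n) (Fin n) ℂ) (W : Submodule ℂ (Fin n → ℂ)) :
    Set (Fin n → ℂ) :=
  {u | ∀ v ∈ W, form M u v = 0}

/-- The subgroup `σ_Q^L ⊆ SU(Q)` of elements acting as a scalar on the line `L` and as
a scalar on its `Q`-orthogonal complement `L^{⊥_Q}`. -/
def sigmaQ {n : ℕ} (M : Matrix (Fin n) (Fin n) ℂ) (L : Projectivization ℂ (Fin n → ℂ)) :
    Set (SL n) :=
  {A | A ∈ SUQ M ∧ ∃ a b : ℂ, (∀ v ∈ L.submodule, A.val.mulVec v = a • v) ∧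
    (∀ u ∈ perp M L.submodule, A.val.mulVec u = b • u)}

/-- The space `Her⁺(ℂⁿ)` of positive definite Hermitian forms on `ℂⁿ`, realized as
positive definite Hermitian `n × n` matrices with the subspace topology. -/
abbrev HerPos (n : ℕ) : Type := {M : Matrix (Fin n) (Fin n) ℂ // M.PosDef}

/-- A map `SL_n(ℂ) → SU_n` preserves commutativity if it sends commuting pairs of
matrices to commuting pairs. -/
def PreservesComm {n : ℕ} (φ : SL n → ↥(SUQ (1 : Matrix (Fin n) (Fin n) ℂ))) : Prop :=
  ∀ A B : SL n, A.val * B.val = B.val * A.val →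
    (φ A).val.val * (φ B).val.val = (φ B).val.val * (φ A).val.val

/-- `φ(Z(SL_n(ℂ))) = Z(SU_n)`: the image of the center of `SL_n(ℂ)` is exactly the
center of `SU_n`. -/
def MapsCenterOnto {n : ℕ} (φ : SL n → ↥(SUQ (1 : Matrix (Fin n) (Fin n) ℂ))) : Prop :=
  φ '' centerSL n = {B : ↥(SUQ (1 : Matrix (Fin n) (Fin n) ℂ)) | B.val ∈ centerSL n}

/-- The stabilizer `Stab_{SU(Q)}(L)` of the line `L` in the group `SU(Q)`. -/
def stabQ {n : ℕ} (M : Matrix (Fin n) (Fin n) ℂ) (L : Projectivization ℂ (Fin n → ℂ)) :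
    Set (SL n) :=
  {A | A ∈ SUQ M ∧ Submodule.map (Matrix.mulVecLin A.val) L.submodule = L.submodule}

/-!
An element `A` of `Stab_{SU(Q)}(L)` preserves both `L` and `L^{⊥_Q}`, so it commutes with every
`S ∈ σ_Q^L`, and `φ(A)` commutes with `φ(S) ∈ σ_{Q₀}^{L'}`. If `φ(S)` is not central, its scalars
on `L'` and on `L'^⊥` differ, `L'` is an eigenspace of `φ(S)`, and `φ(A)` preserves it.

Such an `S` exists: the loop `z ↦ (z^{1-n} on L, z on L^{⊥_Q})`, `|z| = 1`, lies in `σ_Q^L` and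
passes through the whole centre. If `φ` mapped it into the finite centre it would be constant
there by connectedness, while `φ(Z) = Z` forces it to take all `n`-th roots of unity as values.
-/

open Matrix

section Form

variable {n : ℕ} {M : Matrix (Fin n) (Fin n) ℂ}

@[simp] lemma form_add_left (u v w : Fin n → ℂ) : form M (u + v) w = form M u w + form M v w := by
  simp [form, add_dotProduct]

@[simp] lemma form_add_right (u v w : Fin n → ℂ) : form M u (v + w) = form M u v + form M u w := by
  simp [form, mulVec_add, dotProduct_add]

@[simp] lemma form_smul_left (c : ℂ) (u v : Fin n → ℂ) :
    form M (c • u) v = star c * form M u v := by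
  simp [form, smul_dotProduct]

@[simp] lemma form_smul_right (c : ℂ) (u v : Fin n → ℂ) : form M u (c • v) = c * form M u v := by
  simp [form, mulVec_smul, dotProduct_smul]

lemma star_form (hM : M.IsHermitian) (u v : Fin n → ℂ) : star (form M u v) = form M v u := by
  rw [form, form, star_dotProduct, star_star, star_mulVec, hM.eq, dotProduct_mulVec]

lemma form_self_ne_zero (hM : M.PosDef) {v : Fin n → ℂ} (hv : v ≠ 0) : form M v v ≠ 0 :=
  (hM.dotProduct_mulVec_pos hv).ne'

lemma smul_mem_perp {W : Submodule ℂ (Fin n → ℂ)} {y : Fin n → ℂ} (c : ℂ) (hy : y ∈ perp M W) :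
    c • y ∈ perp M W := fun v hv => by rw [form_smul_left, hy v hv, mul_zero]

lemma form_eq_zero_of_mem_perp (hM : M.IsHermitian) {W : Submodule ℂ (Fin n → ℂ)}
    {x y : Fin n → ℂ} (hx : x ∈ W) (hy : y ∈ perp M W) : form M x y = 0 := by
  rw [← star_form hM, hy x hx, star_zero]

lemma form_add_add_of_mem_perp (hM : M.IsHermitian) {W : Submodule ℂ (Fin n → ℂ)}
    {x x' y y' : Fin n → ℂ} (hx : x ∈ W) (hx' : x' ∈ W) (hy : y ∈ perp M W)
    (hy' : y' ∈ perp M W) :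
    form M (x + y) (x' + y') = form M x x' + form M y y' := by
  simp only [form_add_left, form_add_right, hy x' hx', form_eq_zero_of_mem_perp hM hx hy']
  ring

end Form

lemma Projectivization.rep_mem_submodule {K V : Type*} [DivisionRing K] [AddCommGroup V]
    [Module K V] (L : Projectivization K V) : L.rep ∈ L.submodule :=
  L.submodule_eq ▸ Submodule.mem_span_singleton_self _

section Line

variable {n : ℕ} {M : Matrix (Fin n) (Fin n) ℂ}

/-- The coefficient of the `M`-orthogonal projection of `u` onto `ℂ ∙ v`. -/
noncomputable def lineCoeff (M : Matrix (Fin n) (Fin n) ℂ) (v u : Fin n → ℂ) : ℂ :=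
  form M v u / form M v v

lemma lineCoeff_smul_self (hM : M.PosDef) {v : Fin n → ℂ} (hv : v ≠ 0) (c : ℂ) :
    lineCoeff M v (c • v) = c := by
  rw [lineCoeff, form_smul_right, mul_div_assoc, div_self (form_self_ne_zero hM hv), mul_one]

lemma lineCoeff_eq_zero_of_mem_perp (hM : M.IsHermitian) (L : Projectivization ℂ (Fin n → ℂ))
    {u : Fin n → ℂ} (hu : u ∈ perp M L.submodule) : lineCoeff M L.rep u = 0 := by
  rw [lineCoeff, form_eq_zero_of_mem_perp hM L.rep_mem_submodule hu, zero_div]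

lemma sub_lineCoeff_smul_mem_perp (hM : M.PosDef) (L : Projectivization ℂ (Fin n → ℂ))
    (u : Fin n → ℂ) : u - lineCoeff M L.rep u • L.rep ∈ perp M L.submodule := by
  intro v hv
  obtain ⟨c, rfl⟩ := Submodule.mem_span_singleton.1 (L.submodule_eq ▸ hv)
  simp only [lineCoeff, sub_eq_add_neg, ← neg_smul, form_add_left, form_smul_left,
    form_smul_right, star_neg, star_div₀, star_form hM.1]
  field_simp [form_self_ne_zero hM L.rep_nonzero]
  ring

lemma exists_add_mem_perp (hM : M.PosDef) (L : Projectivization ℂ (Fin n → ℂ))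
    (u : Fin n → ℂ) : ∃ x ∈ L.submodule, ∃ y ∈ perp M L.submodule, x + y = u :=
  ⟨_, L.submodule.smul_mem _ L.rep_mem_submodule, _, sub_lineCoeff_smul_mem_perp hM L u,
    add_sub_cancel _ _⟩

end Line

section Stabilizer

variable {n : ℕ} {M : Matrix (Fin n) (Fin n) ℂ} {L : Projectivization ℂ (Fin n → ℂ)} {A : SL n}

lemma mulVec_mem_of_mem_stabQ (hA : A ∈ stabQ M L) {x : Fin n → ℂ} (hx : x ∈ L.submodule) :
    A.val *ᵥ x ∈ L.submodule :=
  hA.2 ▸ Submodule.mem_map_of_mem (f := mulVecLin A.val) hx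

lemma mulVec_mem_perp_of_mem_stabQ (hA : A ∈ stabQ M L) {y : Fin n → ℂ}
    (hy : y ∈ perp M L.submodule) : A.val *ᵥ y ∈ perp M L.submodule := by
  intro v hv
  rw [← hA.2] at hv
  obtain ⟨x, hx, rfl⟩ := hv
  rw [mulVecLin_apply, hA.1, hy x hx]

end Stabilizer

namespace Matrix

variable {ι R K : Type*} [Fintype ι]

lemma commute_of_mulVec_eq_smul [CommRing R] {A S : Matrix ι ι R} {U W : Set (ι → R)} {a b : R}
    (hUW : ∀ u, ∃ x ∈ U, ∃ y ∈ W, x + y = u) (hAU : ∀ x ∈ U, A *ᵥ x ∈ U)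
    (hAW : ∀ y ∈ W, A *ᵥ y ∈ W) (hSU : ∀ x ∈ U, S *ᵥ x = a • x)
    (hSW : ∀ y ∈ W, S *ᵥ y = b • y) : Commute A S := by
  refine ext_iff_mulVec.2 fun u => ?_
  obtain ⟨x, hx, y, hy, rfl⟩ := hUW u
  simp only [← mulVec_mulVec, mulVec_add, hSU x hx, hSW y hy, hSU _ (hAU x hx),
    hSW _ (hAW y hy), mulVec_smul]

lemma eq_smul_one_of_mulVec_eq_smul [DecidableEq ι] [CommRing R] {S : Matrix ι ι R}
    {U W : Set (ι → R)} {a : R}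
    (hUW : ∀ u, ∃ x ∈ U, ∃ y ∈ W, x + y = u) (hSU : ∀ x ∈ U, S *ᵥ x = a • x)
    (hSW : ∀ y ∈ W, S *ᵥ y = a • y) : S = a • 1 := by
  refine ext_iff_mulVec.2 fun u => ?_
  obtain ⟨x, hx, y, hy, rfl⟩ := hUW u
  rw [mulVec_add, hSU x hx, hSW y hy, smul_mulVec, one_mulVec, smul_add]

lemma mem_of_mulVec_eq_smul [Field K] {S : Matrix ι ι K} {U W : Set (ι → K)} {a b : K}
    (hUW : ∀ u, ∃ x ∈ U, ∃ y ∈ W, x + y = u) (hSU : ∀ x ∈ U, S *ᵥ x = a • x)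
    (hSW : ∀ y ∈ W, S *ᵥ y = b • y) (hab : a ≠ b) {v : ι → K} (hv : S *ᵥ v = a • v) : v ∈ U := by
  obtain ⟨x, hx, y, hy, rfl⟩ := hUW v
  rw [mulVec_add, hSU x hx, hSW y hy, smul_add, add_right_inj, ← sub_eq_zero, ← sub_smul,
    smul_eq_zero, sub_eq_zero] at hv
  rcases hv with hba | rfl
  · exact absurd hba.symm hab
  · simpa using hx

lemma map_mulVecLin_eq_of_commute [DecidableEq ι] [CommRing R] {B S : Matrix ι ι R}
    {U : Submodule R (ι → R)} {a : R} (hU : ∀ v, S *ᵥ v = a • v → v ∈ U)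
    (hSU : ∀ x ∈ U, S *ᵥ x = a • x) (hB : IsUnit B)
    (hBS : Commute B S) : U.map B.mulVecLin = U := by
  obtain ⟨B, rfl⟩ := hB
  have hmaps : ∀ C : Matrix ι ι R, Commute C S → ∀ x ∈ U, C *ᵥ x ∈ U := fun C hC x hx =>
    hU _ (by rw [mulVec_mulVec, ← hC.eq, ← mulVec_mulVec, hSU x hx, mulVec_smul])
  refine le_antisymm (Submodule.map_le_iff_le_comap.2 fun x hx => hmaps _ hBS x hx) fun x hx => ?_
  refine ⟨(↑B⁻¹ : Matrix ι ι R) *ᵥ x, hmaps _ hBS.units_inv_left x hx, ?_⟩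
  rw [mulVecLin_apply, mulVec_mulVec, Units.mul_inv, one_mulVec]

end Matrix

section LineScalar

variable {n : ℕ} {M : Matrix (Fin n) (Fin n) ℂ}

/-- The matrix acting as `a` on the line spanned by `v` and as `b` on its `M`-orthogonal
complement. -/
noncomputable def lineScalarMatrix (M : Matrix (Fin n) (Fin n) ℂ) (v : Fin n → ℂ) (a b : ℂ) :
    Matrix (Fin n) (Fin n) ℂ :=
  b • 1 + (a - b) • vecMulVec v ((form M v v)⁻¹ • (star v ᵥ* M))

lemma smul_vecMul_dotProduct_eq_lineCoeff (v u : Fin n → ℂ) :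
    (form M v v)⁻¹ • (star v ᵥ* M) ⬝ᵥ u = lineCoeff M v u := by
  rw [smul_dotProduct, ← dotProduct_mulVec, smul_eq_mul, inv_mul_eq_div]
  rfl

lemma lineScalarMatrix_mulVec (v : Fin n → ℂ) (a b : ℂ) (u : Fin n → ℂ) :
    lineScalarMatrix M v a b *ᵥ u = b • u + ((a - b) * lineCoeff M v u) • v := by
  rw [lineScalarMatrix, add_mulVec, smul_mulVec, smul_mulVec, one_mulVec, vecMulVec_mulVec,
    smul_vecMul_dotProduct_eq_lineCoeff, op_smul_eq_smul, smul_smul]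

lemma lineScalarMatrix_self (v : Fin n → ℂ) (a : ℂ) : lineScalarMatrix M v a a = a • 1 := by
  simp [lineScalarMatrix]

lemma lineScalarMatrix_mulVec_of_mem (hM : M.PosDef) (L : Projectivization ℂ (Fin n → ℂ))
    (a b : ℂ) {x : Fin n → ℂ} (hx : x ∈ L.submodule) :
    lineScalarMatrix M L.rep a b *ᵥ x = a • x := by
  obtain ⟨c, rfl⟩ := Submodule.mem_span_singleton.1 (L.submodule_eq ▸ hx)
  rw [lineScalarMatrix_mulVec, lineCoeff_smul_self hM L.rep_nonzero]
  module

lemma lineScalarMatrix_mulVec_of_mem_perp (hM : M.IsHermitian)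
    (L : Projectivization ℂ (Fin n → ℂ)) (a b : ℂ) {y : Fin n → ℂ}
    (hy : y ∈ perp M L.submodule) : lineScalarMatrix M L.rep a b *ᵥ y = b • y := by
  rw [lineScalarMatrix_mulVec, lineCoeff_eq_zero_of_mem_perp hM L hy, mul_zero, zero_smul,
    add_zero]

lemma det_lineScalarMatrix (hM : M.PosDef) {v : Fin n → ℂ} (hv : v ≠ 0) (a : ℂ) {b : ℂ}
    (hb : b ≠ 0) : (lineScalarMatrix M v a b).det = b ^ (n - 1) * a := by
  obtain ⟨m, rfl⟩ : ∃ m, n = m + 1 := Nat.exists_eq_succ_of_ne_zero fun hn => hv (by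
    subst hn; exact Subsingleton.elim _ _)
  have hrankOne : lineScalarMatrix M v a b = b • (1 + replicateCol Unit ((b⁻¹ * (a - b)) • v) *
      replicateRow Unit ((form M v v)⁻¹ • (star v ᵥ* M))) := by
    rw [← vecMulVec_eq, lineScalarMatrix, smul_add, smul_vecMulVec, smul_smul,
      mul_inv_cancel_left₀ hb]
  have hcoeff : lineCoeff M v v = 1 := div_self (form_self_ne_zero hM hv)
  rw [hrankOne, det_smul, det_one_add_replicateCol_mul_replicateRow, dotProduct_smul,
    smul_vecMul_dotProduct_eq_lineCoeff, hcoeff, Fintype.card_fin, Nat.add_sub_cancel,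
    smul_eq_mul, mul_one, pow_succ, mul_assoc, mul_add, mul_one, mul_inv_cancel_left₀ hb]
  ring

end LineScalar

section Loop

variable {n : ℕ} {M : Matrix (Fin n) (Fin n) ℂ}

lemma mem_SUQ_of_mulVec_eq_smul (hM : M.PosDef) (L : Projectivization ℂ (Fin n → ℂ)) {S : SL n}
    {a b : ℂ} (ha : ‖a‖ = 1) (hb : ‖b‖ = 1) (hSL : ∀ x ∈ L.submodule, S.val *ᵥ x = a • x)
    (hSperp : ∀ y ∈ perp M L.submodule, S.val *ᵥ y = b • y) : S ∈ SUQ M := by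
  intro u v
  obtain ⟨x, hx, y, hy, rfl⟩ := exists_add_mem_perp hM L u
  obtain ⟨x', hx', y', hy', rfl⟩ := exists_add_mem_perp hM L v
  rw [mulVec_add, mulVec_add, hSL x hx, hSL x' hx', hSperp y hy, hSperp y' hy',
    form_add_add_of_mem_perp hM.1 (L.submodule.smul_mem a hx) (L.submodule.smul_mem a hx')
      (smul_mem_perp b hy) (smul_mem_perp b hy'),
    form_add_add_of_mem_perp hM.1 hx hx' hy hy']
  simp only [form_smul_left, form_smul_right, ← mul_assoc, Complex.star_def, Complex.mul_conj',
    ha, hb, Complex.ofReal_one, one_pow, one_mul]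

lemma smul_one_mem_SUQ {S : SL n} {ζ : ℂ} (hζ : ‖ζ‖ = 1) (hS : S.val = ζ • 1) : S ∈ SUQ M := by
  intro u v
  rw [hS, smul_mulVec, smul_mulVec, one_mulVec, one_mulVec, form_smul_left, form_smul_right,
    ← mul_assoc, Complex.star_def, Complex.conj_mul', hζ, Complex.ofReal_one, one_pow, one_mul]

/-- The element of `σ_M^L` acting as `z^{1-n}` on `L` and as `z` on `L^{⊥_M}`: the exponent
makes the determinant `1`, and at `z = ζ` with `ζ^n = 1` it is the central element `ζ • 1`. -/
noncomputable def sigmaLoop (hM : M.PosDef) (L : Projectivization ℂ (Fin n → ℂ)) (z : Circle) :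
    SL n :=
  ⟨lineScalarMatrix M L.rep ↑(z⁻¹ ^ (n - 1)) z, by
    rw [det_lineScalarMatrix hM L.rep_nonzero _ z.coe_ne_zero, Circle.coe_pow, Circle.coe_inv,
      inv_pow, mul_inv_cancel₀ (pow_ne_zero _ z.coe_ne_zero)]⟩

lemma sigmaLoop_mem_sigmaQ (hM : M.PosDef) (L : Projectivization ℂ (Fin n → ℂ)) (z : Circle) :
    sigmaLoop hM L z ∈ sigmaQ M L :=
  have hL := fun x (hx : x ∈ L.submodule) =>
    lineScalarMatrix_mulVec_of_mem hM L (↑(z⁻¹ ^ (n - 1))) z hx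
  have hperp := fun y (hy : y ∈ perp M L.submodule) =>
    lineScalarMatrix_mulVec_of_mem_perp hM.1 L (↑(z⁻¹ ^ (n - 1))) z hy
  ⟨mem_SUQ_of_mulVec_eq_smul hM L (Circle.norm_coe _) (Circle.norm_coe z) hL hperp, _, _, hL, hperp⟩

lemma continuous_sigmaLoop (hM : M.PosDef) (L : Projectivization ℂ (Fin n → ℂ)) :
    Continuous (sigmaLoop hM L) := by
  refine Continuous.subtype_mk ?_ _
  unfold lineScalarMatrix
  fun_prop

lemma exists_sigmaLoop_val_eq_smul_one (hM : M.PosDef) (L : Projectivization ℂ (Fin n → ℂ))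
    (hn : n ≠ 0) {ζ : ℂ} (hζ : ζ ^ n = 1) : ∃ z, (sigmaLoop hM L z).val = ζ • 1 := by
  let z : Circle := ⟨ζ, mem_sphere_zero_iff_norm.2 (Complex.norm_eq_one_of_pow_eq_one hζ hn)⟩
  have hz : z * z ^ (n - 1) = 1 := by
    rw [← pow_succ', Nat.sub_add_cancel (Nat.pos_of_ne_zero hn)]
    exact Circle.ext hζ
  have hzinv : z⁻¹ ^ (n - 1) = z := by rw [inv_pow, inv_eq_of_mul_eq_one_left hz]
  exact ⟨z, (congrArg (fun w : Circle => lineScalarMatrix M L.rep (w : ℂ) z) hzinv).trans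
    (lineScalarMatrix_self _ _)⟩

lemma exists_sigmaLoop_eq (hM : M.PosDef) (L : Projectivization ℂ (Fin n → ℂ)) (hn : n ≠ 0)
    {S : SL n} (hS : S ∈ centerSL n) : ∃ z, sigmaLoop hM L z = S := by
  obtain ⟨ζ, hζ, hSζ⟩ := hS
  obtain ⟨z, hz⟩ := exists_sigmaLoop_val_eq_smul_one hM L hn hζ
  exact ⟨z, Subtype.ext (hz.trans hSζ.symm)⟩

end Loop

lemma exists_mem_sigmaQ_apply_not_mem_centerSL {n : ℕ} (hn : 1 < n)
    (φ : C(SL n, ↥(SUQ (1 : Matrix (Fin n) (Fin n) ℂ)))) (hcen : MapsCenterOnto ⇑φ)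
    {M : Matrix (Fin n) (Fin n) ℂ} (hM : M.PosDef) (L : Projectivization ℂ (Fin n → ℂ)) :
    ∃ S ∈ sigmaQ M L, (φ S).val ∉ centerSL n := by
  by_contra! hcentral
  have hn0 : n ≠ 0 := by omega
  let i₀ : Fin n := ⟨0, by omega⟩
  let f : Circle → ℂ := fun z => (φ (sigmaLoop hM L z)).val.val i₀ i₀
  have hf : Continuous f := by
    have := continuous_sigmaLoop hM L
    fun_prop
  have hroots : Set.MapsTo f Set.univ (Polynomial.nthRoots n (1 : ℂ)).toFinset := fun z _ => by
    obtain ⟨ζ, hζ, hφz⟩ := hcentral _ (sigmaLoop_mem_sigmaQ hM L z)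
    simpa [f, hφz, Polynomial.mem_nthRoots (Nat.pos_of_ne_zero hn0)] using hζ
  have hconst : ∀ z w, f z = f w := fun z w =>
    isPreconnected_univ.constant_of_mapsTo (Finset.finite_toSet _).isDiscrete hf.continuousOn
      hroots trivial trivial
  -- `φ` maps the centre, which lies on the loop, onto the centre
  have hsurj : ∀ ζ : ℂ, ζ ^ n = 1 → ∃ z, f z = ζ := by
    intro ζ hζ
    obtain ⟨z, hz⟩ := exists_sigmaLoop_val_eq_smul_one hM L hn0 hζ
    let B : ↥(SUQ (1 : Matrix (Fin n) (Fin n) ℂ)) :=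
      ⟨sigmaLoop hM L z, smul_one_mem_SUQ (Complex.norm_eq_one_of_pow_eq_one hζ hn0) hz⟩
    obtain ⟨S, hS, hφS⟩ : B ∈ φ '' centerSL n := hcen ▸ ⟨ζ, hζ, hz⟩
    obtain ⟨w, rfl⟩ := exists_sigmaLoop_eq hM L hn0 hS
    exact ⟨w, by simp [f, hφS, B, hz, i₀]⟩
  obtain ⟨z, hz⟩ := hsurj 1 (one_pow n)
  have hω := Complex.isPrimitiveRoot_exp n hn0
  obtain ⟨w, hw⟩ := hsurj _ hω.pow_eq_one
  exact hω.ne_one hn (hw.symm.trans ((hconst w z).trans hz))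

lemma mem_centerSL_of_val_eq_smul_one {n : ℕ} {S : SL n} {a : ℂ} (hS : S.val = a • 1) :
    S ∈ centerSL n :=
  ⟨a, by simpa [hS, det_smul] using S.2, hS⟩

/-- if `φ(σ_Q^L) ⊆ σ_{Q₀}^{L'}` then `φ(Stab_{SU(Q)}(L)) ⊆ Stab_{SU_n}(L')`. -/
theorem phi_maps_stabilizer_into_stabilizer (n : ℕ) (hn : 8 ≤ n)
    (φ : ContinuousMap.HomotopyEquiv (SL n) ↥(SUQ (1 : Matrix (Fin n) (Fin n) ℂ)))
    (hcomm : PreservesComm ⇑φ.toFun) (hcen : MapsCenterOnto ⇑φ.toFun)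
    (Q : HerPos n) (L L' : Projectivization ℂ (Fin n → ℂ))
    (h : ∀ A ∈ sigmaQ Q.val L, (φ.toFun A).val ∈ sigmaQ 1 L') :
    ∀ A ∈ stabQ Q.val L, (φ.toFun A).val ∈ stabQ (1 : Matrix (Fin n) (Fin n) ℂ) L' := by
  intro A hA
  obtain ⟨S, hS, hφS⟩ := exists_mem_sigmaQ_apply_not_mem_centerSL (by omega) φ.toFun hcen Q.2 L
  obtain ⟨-, a', b', ha'L', hb'L'⟩ := h S hS
  obtain ⟨-, a, b, haL, hbL⟩ := hS
  have hdecomp' := exists_add_mem_perp PosDef.one L'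
  have hab' : a' ≠ b' := by
    rintro rfl
    exact hφS <| mem_centerSL_of_val_eq_smul_one <|
      eq_smul_one_of_mulVec_eq_smul hdecomp' ha'L' hb'L'
  have hAS : Commute A.val S.val := commute_of_mulVec_eq_smul (exists_add_mem_perp Q.2 L)
    (fun _ => mulVec_mem_of_mem_stabQ hA) (fun _ => mulVec_mem_perp_of_mem_stabQ hA) haL hbL
  refine ⟨(φ.toFun A).2, map_mulVecLin_eq_of_commute
    (fun _ => mem_of_mulVec_eq_smul hdecomp' ha'L' hb'L' hab') ha'L'
    (by rw [isUnit_iff_isUnit_det, (φ.toFun A).val.2]; exact isUnit_one) (hcomm A S hAS)⟩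
end

section
/- Let n ≥ 8 and let φ : SL_n(ℂ) → SU_n be a homotopy equivalence preserving commutativity with φ(Z(SL_n(ℂ))) = Z(SU_n), together with, for each Q ∈ Her⁺(ℂⁿ), a ℂ-linear isometry 𝓛_Q : (ℂⁿ, Q) → (ℂⁿ, Q₀) satisfying φ(σ_Q^L) ⊆ σ_{Q₀}^{𝓛_Q(L)} for all lines L, and with 𝓛_{Q₀} = Id. Fix Q ∈ Her⁺(ℂⁿ) and let A : (ℂⁿ, Q) → (ℂⁿ, Q₀) be any ℂ-linear isometry with det A = 1, and let P be the polar part of A (the unique positive definite Hermitian matrix with P*P = A*A, where * denotes conjugate transpose). Then there exists U ∈ SU_n such that 𝓛_Q(L) = (UP)(L) for every line L ∈ ℙ(ℂⁿ); moreover U acts as a homothety on every eigenspace of P, and hence UP = PU. -/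
open scoped ComplexOrder

/-!
Write `𝓛_Q` as a matrix `M`. The isometry conditions say `Mᴴ M = Q = P²`, so `M P⁻¹` is unitary
and a scalar multiple `U` of it lies in `SU_n`; then `U P` is a nonzero multiple of `M` and induces
the same map on lines.

The heart of the proof is that `M` maps every eigenline `L` of `Q` to itself. An eigenline of `Q`
has the same `Q`- and `Q₀`-orthogonal complement, so the rotations acting by `z` on `L^⊥` and by
`z^{1-n}` on `L` (`|z| = 1`) lie in both `σ_Q^L` and `σ_{Q₀}^L`. They form a connected family
containing the centre, and `φ` is continuous and maps the centre onto the finite centre of `SU_n`,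
so some rotation has a non-central image. That image lies in `σ_{Q₀}^{𝓛_Q(L)} ∩ σ_{Q₀}^L`, and for
`n ≥ 3` a non-central element lies in `σ_{Q₀}^L` for at most one line, so `𝓛_Q(L) = L`.

Consequently `M`, and with it `U = l M P⁻¹`, is a homothety on every eigenspace of `P`, and a
matrix with this property commutes with the Hermitian matrix `P`.
-/

open Matrix

section Forms

variable {n : ℕ}

lemma form_mulVec (M S : Matrix (Fin n) (Fin n) ℂ) (u v : Fin n → ℂ) :
    form M (S *ᵥ u) (S *ᵥ v) = form (Sᴴ * M * S) u v := by
  rw [form, form, star_mulVec, mulVec_mulVec, dotProduct_mulVec, dotProduct_mulVec,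
    vecMul_vecMul, Matrix.mul_assoc]

lemma eq_of_forall_form_eq {B C : Matrix (Fin n) (Fin n) ℂ}
    (h : ∀ u v, form B u v = form C u v) : B = C := by
  ext i j
  simpa [form, Pi.star_single, mulVec_single, single_dotProduct] using
    h (Pi.single i 1) (Pi.single j 1)

lemma conjTranspose_mul_self_eq_of_isometry {S M : Matrix (Fin n) (Fin n) ℂ}
    (h : ∀ u v, form 1 (S *ᵥ u) (S *ᵥ v) = form M u v) : Sᴴ * S = M :=
  eq_of_forall_form_eq fun u v => by rw [← h, form_mulVec, Matrix.mul_one]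

lemma mem_SUQ_iff {M : Matrix (Fin n) (Fin n) ℂ} {A : SL n} :
    A ∈ SUQ M ↔ A.valᴴ * M * A.val = M :=
  ⟨fun h => eq_of_forall_form_eq fun u v => by rw [← form_mulVec]; exact h u v,
    fun h u v => by rw [form_mulVec, h]⟩

lemma form_one_mulVec_of_mem_unitaryGroup {U : Matrix (Fin n) (Fin n) ℂ}
    (hU : U ∈ unitaryGroup (Fin n) ℂ) (u v : Fin n → ℂ) :
    form 1 (U *ᵥ u) (U *ᵥ v) = form 1 u v := by
  rw [form_mulVec, Matrix.mul_one, ← star_eq_conjTranspose, mem_unitaryGroup_iff'.mp hU]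

lemma mem_perp_one_span_singleton {x u : Fin n → ℂ} :
    u ∈ perp 1 (ℂ ∙ x) ↔ star x ⬝ᵥ u = 0 := by
  rw [← star_eq_zero, ← star_dotProduct]
  refine ⟨fun h => by simpa [form] using h x (Submodule.mem_span_singleton_self x), ?_⟩
  intro h y hy
  obtain ⟨s, rfl⟩ := Submodule.mem_span_singleton.mp hy
  simp [form, h]

end Forms

section Images

variable {ι K : Type*} [Fintype ι] [Field K]

lemma mulVec_image_span_singleton (M : Matrix ι ι K) (v : ι → K) :
    M.mulVec '' (K ∙ v : Set (ι → K)) = (K ∙ (M *ᵥ v) : Set (ι → K)) := by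
  have h := congrArg SetLike.coe (Submodule.map_span (mulVecLin M) {v})
  rwa [Submodule.map_coe, Set.image_singleton] at h

lemma smul_mulVec_image_submodule (M : Matrix ι ι K) {l : K} (hl : l ≠ 0)
    (p : Submodule K (ι → K)) : (l • M).mulVec '' p = M.mulVec '' p := by
  ext y
  constructor
  · rintro ⟨x, hx, rfl⟩
    exact ⟨l • x, p.smul_mem l hx, by rw [smul_mulVec, mulVec_smul]⟩
  · rintro ⟨x, hx, rfl⟩
    exact ⟨l⁻¹ • x, p.smul_mem _ hx, by
      rw [smul_mulVec, mulVec_smul, smul_smul, mul_inv_cancel₀ hl, one_smul]⟩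

end Images

lemma Complex.mem_unitary_of_norm_eq_one {z : ℂ} (h : ‖z‖ = 1) : z ∈ unitary ℂ :=
  Unitary.mem_iff_star_mul_self.2 (by simp [Complex.conj_mul', h])

section Polar

variable {ι : Type*} [Fintype ι] [DecidableEq ι]

lemma mul_inv_mem_unitaryGroup {M P : Matrix ι ι ℂ} (hMP : Mᴴ * M = Pᴴ * P)
    (hP : IsUnit P.det) : M * P⁻¹ ∈ unitaryGroup ι ℂ := by
  rw [mem_unitaryGroup_iff', star_eq_conjTranspose, conjTranspose_mul, conjTranspose_nonsing_inv,
    Matrix.mul_assoc, ← Matrix.mul_assoc Mᴴ, hMP, Matrix.mul_assoc, mul_nonsing_inv _ hP,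
    Matrix.mul_one, ← conjTranspose_nonsing_inv, ← conjTranspose_mul, mul_nonsing_inv _ hP,
    conjTranspose_one]

lemma exists_smul_mem_specialUnitaryGroup [Nonempty ι] {W : Matrix ι ι ℂ}
    (hW : W ∈ unitaryGroup ι ℂ) : ∃ l : ℂ, l ≠ 0 ∧ l • W ∈ specialUnitaryGroup ι ℂ := by
  have hdet : W.det ∈ unitary ℂ := det_of_mem_unitary hW
  obtain ⟨l, hl⟩ := IsAlgClosed.exists_pow_nat_eq W.det⁻¹ (Fintype.card_pos (α := ι))
  have hl1 : ‖l‖ = 1 := by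
    rw [← pow_eq_one_iff_of_nonneg (norm_nonneg l) (Fintype.card_ne_zero (α := ι)), ← norm_pow,
      hl, norm_inv, CStarRing.norm_of_mem_unitary hdet, inv_one]
  refine ⟨l, norm_ne_zero_iff.mp (by simp [hl1]), mem_specialUnitaryGroup_iff.mpr
    ⟨Unitary.smul_mem_of_mem (Complex.mem_unitary_of_norm_eq_one hl1) hW, ?_⟩⟩
  rw [det_smul, hl,
    inv_mul_cancel₀ (left_ne_zero_of_mul_eq_one (Unitary.mul_star_self_of_mem hdet))]

end Polar

def IsHomothetyOnEigenspaces {ι K : Type*} [Fintype ι] [CommSemiring K] (U P : Matrix ι ι K) :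
    Prop :=
  ∀ μ : K, ∃ c : K, ∀ v, P *ᵥ v = μ • v → U *ᵥ v = c • v

namespace IsHomothetyOnEigenspaces

variable {ι K : Type*} [Fintype ι]

lemma mul [CommSemiring K] {U V P : Matrix ι ι K} (hU : IsHomothetyOnEigenspaces U P)
    (hV : IsHomothetyOnEigenspaces V P) : IsHomothetyOnEigenspaces (U * V) P := fun μ => by
  obtain ⟨a, ha⟩ := hU μ
  obtain ⟨b, hb⟩ := hV μ
  exact ⟨a * b, fun v hv => by
    rw [← mulVec_mulVec, hb v hv, mulVec_smul, ha v hv, smul_smul, mul_comm]⟩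

lemma smul [CommSemiring K] {U P : Matrix ι ι K} (hU : IsHomothetyOnEigenspaces U P) (l : K) :
    IsHomothetyOnEigenspaces (l • U) P := fun μ => by
  obtain ⟨a, ha⟩ := hU μ
  exact ⟨l * a, fun v hv => by rw [smul_mulVec, ha v hv, smul_smul]⟩

lemma of_mul_self [CommSemiring K] {U P : Matrix ι ι K}
    (hU : IsHomothetyOnEigenspaces U (P * P)) : IsHomothetyOnEigenspaces U P := fun μ => by
  obtain ⟨a, ha⟩ := hU (μ * μ)
  exact ⟨a, fun v hv => ha v (by rw [← mulVec_mulVec, hv, mulVec_smul, hv, smul_smul])⟩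

lemma inv [DecidableEq ι] [Field K] (P : Matrix ι ι K) : IsHomothetyOnEigenspaces P⁻¹ P :=
  fun μ => by
    by_cases hP : IsUnit P.det
    · refine ⟨μ⁻¹, fun v hv => ?_⟩
      have key : μ • (P⁻¹ *ᵥ v) = v := by
        rw [← mulVec_smul, ← hv, mulVec_mulVec, nonsing_inv_mul _ hP, one_mulVec]
      rcases eq_or_ne μ 0 with rfl | hμ
      · rw [← key, zero_smul, mulVec_zero, smul_zero]
      · conv_rhs => rw [← key, smul_smul, inv_mul_cancel₀ hμ, one_smul]
    · exact ⟨0, fun v _ => by rw [nonsing_inv_apply_not_isUnit P hP, zero_mulVec, zero_smul]⟩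

lemma of_forall_mulVec_eq_smul [DecidableEq ι] [Field K] {U P : Matrix ι ι K}
    (h : ∀ μ : K, ∀ v, v ≠ 0 → P *ᵥ v = μ • v → ∃ c : K, U *ᵥ v = c • v) :
    IsHomothetyOnEigenspaces U P := fun μ => by
  set E := Module.End.eigenspace (toLin' P) μ
  have hmem : ∀ v, v ∈ E ↔ P *ᵥ v = μ • v := fun v => by
    rw [Module.End.mem_eigenspace_iff, toLin'_apply]
  have hE : ∀ v ∈ E, toLin' U v ∈ E := fun v hv => by
    rcases eq_or_ne v 0 with rfl | hv0
    · simp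
    obtain ⟨c, hc⟩ := h μ v hv0 ((hmem v).mp hv)
    rw [hmem, toLin'_apply, hc, mulVec_smul, (hmem v).mp hv, smul_comm]
  obtain ⟨c, hc⟩ := ((toLin' U).restrict hE).exists_eq_smul_id_of_forall_notLinearIndependent
    fun w hw => by
      have hw0 : w ≠ 0 := hw.ne_zero 0
      obtain ⟨c, hc⟩ := h μ w (by simpa using hw0) ((hmem w).mp w.2)
      exact (LinearIndependent.pair_iff' hw0).mp hw c (Subtype.ext (by simp [hc]))
  exact ⟨c, fun v hv => congrArg Subtype.val (LinearMap.congr_fun hc ⟨v, (hmem v).mpr hv⟩)⟩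

lemma commute [DecidableEq ι] {𝕜 : Type*} [RCLike 𝕜] {U P : Matrix ι ι 𝕜}
    (hU : IsHomothetyOnEigenspaces U P) (hP : P.IsHermitian) : Commute U P := by
  let b := hP.eigenvectorBasis.toBasis.map (WithLp.linearEquiv 2 𝕜 (ι → 𝕜))
  refine toLin'.injective (b.ext fun j => ?_)
  have he : P *ᵥ b j = (hP.eigenvalues j : 𝕜) • b j := by
    rw [show b j = (hP.eigenvectorBasis j).ofLp by simp [b], hP.mulVec_eigenvectorBasis j,
      RCLike.real_smul_eq_coe_smul (K := 𝕜)]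
  obtain ⟨c, hc⟩ := hU (hP.eigenvalues j)
  rw [toLin'_apply, toLin'_apply, ← mulVec_mulVec, ← mulVec_mulVec, he, mulVec_smul, hc _ he,
    mulVec_smul, he, smul_comm]

end IsHomothetyOnEigenspaces

section LineProj

variable {ι : Type*} [Fintype ι] {v : ι → ℂ}

lemma Matrix.IsHermitian.star_eq_of_mulVec_eq_smul {M : Matrix ι ι ℂ} (hM : M.IsHermitian)
    (hv : v ≠ 0) {μ : ℂ} (hMv : M *ᵥ v = μ • v) : star μ = μ := by
  have h : star (star v ⬝ᵥ M *ᵥ v) = star v ⬝ᵥ M *ᵥ v := by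
    rw [← star_dotProduct, star_mulVec, hM.eq, ← dotProduct_mulVec]
  rw [hMv, dotProduct_smul, smul_eq_mul, star_mul', ← star_dotProduct v v] at h
  exact mul_right_cancel₀ (dotProduct_star_self_eq_zero.not.mpr hv) h

noncomputable def lineProj (v : ι → ℂ) : Matrix ι ι ℂ :=
  (star v ⬝ᵥ v)⁻¹ • vecMulVec v (star v)

lemma lineProj_mulVec (v u : ι → ℂ) :
    lineProj v *ᵥ u = ((star v ⬝ᵥ u) / (star v ⬝ᵥ v)) • v := by
  ext i
  simp [lineProj, smul_mulVec, vecMulVec_mulVec, div_eq_inv_mul]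
  ring

lemma lineProj_mulVec_self (hv : v ≠ 0) : lineProj v *ᵥ v = v := by
  rw [lineProj_mulVec, div_self (dotProduct_star_self_eq_zero.not.mpr hv), one_smul]

lemma lineProj_mul_self (hv : v ≠ 0) : lineProj v * lineProj v = lineProj v := by
  nth_rw 2 [lineProj]
  rw [Matrix.mul_smul, mul_vecMulVec, lineProj_mulVec_self hv, lineProj]

lemma conjTranspose_lineProj (v : ι → ℂ) : (lineProj v)ᴴ = lineProj v := by
  rw [lineProj, conjTranspose_smul, conjTranspose_vecMulVec, star_star, star_inv₀,
    ← star_dotProduct]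

lemma commute_lineProj {M : Matrix ι ι ℂ} (hM : M.IsHermitian) (hv : v ≠ 0) {μ : ℂ}
    (hMv : M *ᵥ v = μ • v) : Commute M (lineProj v) := by
  have hvM : star v ᵥ* M = μ • star v := by
    rw [← hM.eq, ← star_mulVec, hMv, star_smul, hM.star_eq_of_mulVec_eq_smul hv hMv]
  rw [Commute, SemiconjBy, lineProj, Matrix.mul_smul, Matrix.smul_mul, mul_vecMulVec,
    vecMulVec_mul, hMv, hvM, smul_vecMulVec, vecMulVec_smul]

end LineProj

section LineScaling

variable {ι : Type*} [Fintype ι] [DecidableEq ι] {v : ι → ℂ}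

noncomputable def lineScaling (v : ι → ℂ) (z w : ℂ) : Matrix ι ι ℂ :=
  z • (1 - lineProj v) + w • lineProj v

lemma lineScaling_mulVec_of_mem_span (hv : v ≠ 0) (z w : ℂ) {x : ι → ℂ} (hx : x ∈ ℂ ∙ v) :
    lineScaling v z w *ᵥ x = w • x := by
  obtain ⟨s, rfl⟩ := Submodule.mem_span_singleton.mp hx
  rw [lineScaling, add_mulVec, smul_mulVec, smul_mulVec, sub_mulVec, one_mulVec, mulVec_smul,
    lineProj_mulVec_self hv, sub_self, smul_zero, zero_add]

lemma lineScaling_mulVec_of_dotProduct_eq_zero (z w : ℂ) {u : ι → ℂ} (hu : star v ⬝ᵥ u = 0) :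
    lineScaling v z w *ᵥ u = z • u := by
  rw [lineScaling, add_mulVec, smul_mulVec, smul_mulVec, sub_mulVec, one_mulVec, lineProj_mulVec,
    hu, zero_div, zero_smul, sub_zero, smul_zero, add_zero]

lemma lineScaling_self (v : ι → ℂ) (z : ℂ) : lineScaling v z z = z • 1 := by
  rw [lineScaling, ← smul_add, sub_add_cancel]

lemma conjTranspose_lineScaling (v : ι → ℂ) (z w : ℂ) :
    (lineScaling v z w)ᴴ = lineScaling v (star z) (star w) := by
  simp [lineScaling, conjTranspose_lineProj]

lemma lineScaling_mul_lineScaling (hv : v ≠ 0) (z w z' w' : ℂ) :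
    lineScaling v z w * lineScaling v z' w' = lineScaling v (z * z') (w * w') := by
  have h := lineProj_mul_self hv
  simp only [lineScaling, add_mul, mul_add, sub_mul, mul_sub, smul_mul_smul_comm, h, one_mul,
    mul_one, sub_self]
  module

lemma Commute.lineScaling {M : Matrix ι ι ℂ} (h : Commute M (lineProj v)) (z w : ℂ) :
    Commute M (lineScaling v z w) :=
  ((Commute.one_right M).sub_right h |>.smul_right z).add_right (h.smul_right w)

lemma det_lineScaling (hv : v ≠ 0) {z : ℂ} (hz : z ≠ 0) (w : ℂ) :
    (lineScaling v z w).det = z ^ (Fintype.card ι - 1) * w := by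
  have hc : star v ⬝ᵥ v ≠ 0 := dotProduct_star_self_eq_zero.not.mpr hv
  obtain ⟨k, hk⟩ : ∃ k, Fintype.card ι = k + 1 := by
    obtain ⟨i, -⟩ := Function.ne_iff.mp hv
    exact Nat.exists_eq_add_one.mpr (Fintype.card_pos_iff.mpr ⟨i⟩)
  have h : lineScaling v z w = z • (1 + replicateCol Unit ((z⁻¹ * (w - z) * (star v ⬝ᵥ v)⁻¹) • v)
      * replicateRow Unit (star v)) := by
    rw [← vecMulVec_eq, smul_vecMulVec, lineScaling, lineProj, smul_add, smul_smul, smul_smul,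
      mul_assoc z⁻¹, mul_inv_cancel_left₀ hz]
    module
  rw [h, det_smul, det_one_add_replicateCol_mul_replicateRow, dotProduct_smul, smul_eq_mul,
    mul_assoc, inv_mul_cancel₀ hc, mul_one, hk, Nat.add_sub_cancel, pow_succ]
  field_simp
  ring

end LineScaling

section Rotations

variable {n : ℕ} {v : Fin n → ℂ}

lemma lineScaling_mem_sigmaQ {M : Matrix (Fin n) (Fin n) ℂ} (hM : M.IsHermitian) (hv : v ≠ 0)
    {μ : ℂ} (hμ : μ ≠ 0) (hMv : M *ᵥ v = μ • v) {z w : ℂ} (hz : z ∈ unitary ℂ)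
    (hw : w ∈ unitary ℂ) (hdet : (lineScaling v z w).det = 1) :
    (⟨lineScaling v z w, hdet⟩ : SL n) ∈ sigmaQ M (Projectivization.mk ℂ v hv) := by
  refine ⟨mem_SUQ_iff.mpr ?_, w, z, fun x hx => ?_, fun u hu => ?_⟩
  · change (lineScaling v z w)ᴴ * M * lineScaling v z w = M
    rw [Matrix.mul_assoc, ((commute_lineProj hM hv hMv).lineScaling z w).eq,
      ← Matrix.mul_assoc, conjTranspose_lineScaling, lineScaling_mul_lineScaling hv,
      Unitary.star_mul_self_of_mem hz, Unitary.star_mul_self_of_mem hw, lineScaling_self,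
      one_smul, Matrix.one_mul]
  · rw [Projectivization.submodule_mk] at hx
    exact lineScaling_mulVec_of_mem_span hv z w hx
  · have h : form M u v = 0 := hu v (by simp [Submodule.mem_span_singleton_self])
    rw [form, hMv, dotProduct_smul, smul_eq_mul, mul_eq_zero, or_iff_right hμ] at h
    exact lineScaling_mulVec_of_dotProduct_eq_zero z w (by rw [star_dotProduct, h, star_zero])

-- The factor `z^{1-n}` on the line makes the determinant `1`, and equals `z` when `z ^ n = 1`:
-- the family passes through every element of the centre.
noncomputable def lineRotation (v : Fin n → ℂ) (hv : v ≠ 0) (z : Circle) : SL n :=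
  ⟨lineScaling v z ↑(z ^ (n - 1))⁻¹, by
    rw [det_lineScaling hv z.coe_ne_zero, Fintype.card_fin, Circle.coe_inv, Circle.coe_pow,
      mul_inv_cancel₀ (pow_ne_zero _ z.coe_ne_zero)]⟩

lemma continuous_lineRotation (hv : v ≠ 0) : Continuous (lineRotation v hv) := by
  refine Continuous.subtype_mk ?_ _
  unfold lineScaling
  fun_prop

lemma lineRotation_mem_sigmaQ {M : Matrix (Fin n) (Fin n) ℂ} (hM : M.IsHermitian) (hv : v ≠ 0)
    {μ : ℂ} (hμ : μ ≠ 0) (hMv : M *ᵥ v = μ • v) (z : Circle) :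
    lineRotation v hv z ∈ sigmaQ M (Projectivization.mk ℂ v hv) :=
  lineScaling_mem_sigmaQ hM hv hμ hMv (Complex.mem_unitary_of_norm_eq_one z.norm_coe)
    (Complex.mem_unitary_of_norm_eq_one (z ^ (n - 1))⁻¹.norm_coe) _

lemma centerSL_subset_range_lineRotation (hv : v ≠ 0) :
    centerSL n ⊆ Set.range (lineRotation v hv) := by
  rintro A ⟨ζ, hζn, hA⟩
  have hn : n ≠ 0 := by rintro rfl; exact hv (Subsingleton.elim _ _)
  let z : Circle := ⟨ζ, mem_sphere_zero_iff_norm.mpr (Complex.norm_eq_one_of_pow_eq_one hζn hn)⟩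
  refine ⟨z, Subtype.ext ?_⟩
  have hz : ((z ^ (n - 1))⁻¹ : Circle) = z := by
    rw [inv_eq_iff_eq_inv, ← mul_eq_one_iff_eq_inv, ← pow_succ,
      Nat.sub_add_cancel (Nat.one_le_iff_ne_zero.mpr hn)]
    exact Circle.ext (by simpa using hζn)
  change lineScaling v z ↑(z ^ (n - 1))⁻¹ = A.val
  rw [hz, hA, lineScaling_self]

end Rotations

section Center

variable {n : ℕ}

lemma centerSL_finite (hn : n ≠ 0) : (centerSL n).Finite := by
  refine (((Polynomial.nthRootsFinset n (1 : ℂ)).finite_toSet.image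
    fun ζ => ζ • (1 : Matrix (Fin n) (Fin n) ℂ)).preimage Subtype.val_injective.injOn).subset ?_
  rintro A ⟨ζ, hζ, hA⟩
  exact ⟨ζ, (Polynomial.mem_nthRootsFinset (Nat.pos_of_ne_zero hn) 1).mpr hζ, hA.symm⟩

lemma exists_mem_SUQ_one_eq_smul_one (hn : n ≠ 0) {ζ : ℂ} (hζ : ζ ^ n = 1) :
    ∃ B : SUQ (1 : Matrix (Fin n) (Fin n) ℂ), B.val.val = ζ • 1 := by
  have hζ1 : star ζ * ζ = 1 := Unitary.star_mul_self_of_mem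
    (Complex.mem_unitary_of_norm_eq_one (Complex.norm_eq_one_of_pow_eq_one hζ hn))
  refine ⟨⟨⟨ζ • 1, by simp [hζ]⟩, mem_SUQ_iff.mpr ?_⟩, rfl⟩
  change (ζ • 1 : Matrix (Fin n) (Fin n) ℂ)ᴴ * 1 * (ζ • 1) = 1
  rw [conjTranspose_smul, conjTranspose_one, Matrix.mul_one, smul_mul_smul_comm, hζ1, one_smul,
    Matrix.one_mul]

lemma exists_image_not_mem_centerSL (hn : 2 ≤ n)
    (φ : C(SL n, SUQ (1 : Matrix (Fin n) (Fin n) ℂ))) (hcen : MapsCenterOnto φ)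
    {S : Set (SL n)} (hS : IsPreconnected S) (hZ : centerSL n ⊆ S) :
    ∃ A ∈ S, (φ A).val ∉ centerSL n := by
  by_contra! h
  have hfin : {B : SUQ (1 : Matrix (Fin n) (Fin n) ℂ) | B.val ∈ centerSL n}.Finite :=
    (centerSL_finite (by omega)).preimage Subtype.val_injective.injOn
  obtain ⟨ζ, hζ, hζ1⟩ : ∃ ζ : ℂ, ζ ^ n = 1 ∧ ζ ≠ 1 :=
    ⟨_, (Complex.isPrimitiveRoot_exp n (by omega)).pow_eq_one,
      (Complex.isPrimitiveRoot_exp n (by omega)).ne_one (by omega)⟩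
  obtain ⟨B₁, hB₁⟩ := exists_mem_SUQ_one_eq_smul_one (by omega) (one_pow n)
  obtain ⟨B₂, hB₂⟩ := exists_mem_SUQ_one_eq_smul_one (by omega) hζ
  obtain ⟨A₁, hA₁, rfl⟩ : B₁ ∈ φ '' centerSL n := hcen ▸ ⟨1, one_pow n, hB₁⟩
  obtain ⟨A₂, hA₂, rfl⟩ : B₂ ∈ φ '' centerSL n := hcen ▸ ⟨ζ, hζ, hB₂⟩
  have h12 : φ A₁ = φ A₂ :=
    hS.constant_of_mapsTo hfin.isDiscrete φ.continuous.continuousOn h (hZ hA₁) (hZ hA₂)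
  have : NeZero n := ⟨by omega⟩
  exact hζ1 (smul_left_injective ℂ one_ne_zero (hB₁.symm.trans (h12 ▸ hB₂))).symm

end Center

section CommonEigenlines

variable {n : ℕ}

lemma mem_centerSL_of_mulVec_eq_smul {B : SL n} {a : ℂ} (h : ∀ u, B.val *ᵥ u = a • u) :
    B ∈ centerSL n := by
  have hB : B.val = a • 1 := ext_iff_mulVec.mpr fun u => by rw [h, smul_mulVec, one_mulVec]
  exact ⟨a, by simpa [hB] using B.2, hB⟩

lemma exists_sub_smul_mem_perp_one {x : Fin n → ℂ} (hx : x ≠ 0) (u : Fin n → ℂ) :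
    ∃ s : ℂ, u - s • x ∈ perp 1 (ℂ ∙ x) := by
  refine ⟨(star x ⬝ᵥ u) / (star x ⬝ᵥ x), mem_perp_one_span_singleton.mpr ?_⟩
  rw [dotProduct_sub, dotProduct_smul, smul_eq_mul,
    div_mul_cancel₀ _ (dotProduct_star_self_eq_zero.not.mpr hx), sub_self]

lemma exists_ne_zero_mem_perp_one_of_three_le (hn : 3 ≤ n) (x y : Fin n → ℂ) :
    ∃ u ≠ 0, u ∈ perp 1 (ℂ ∙ x) ∧ u ∈ perp 1 (ℂ ∙ y) := by
  let f := mulVecLin (of ![star x, star y])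
  have hf : Module.finrank ℂ (Fin 2 → ℂ) < Module.finrank ℂ (Fin n → ℂ) := by
    rw [Module.finrank_fin_fun, Module.finrank_fin_fun]
    omega
  obtain ⟨u, hu, hu0⟩ :=
    Submodule.exists_mem_ne_zero_of_ne_bot (LinearMap.ker_ne_bot_of_finrank_lt (f := f) hf)
  have h := LinearMap.mem_ker.mp hu
  refine ⟨u, hu0, mem_perp_one_span_singleton.mpr ?_, mem_perp_one_span_singleton.mpr ?_⟩
  · simpa [f] using congrFun h 0
  · simpa [f] using congrFun h 1

lemma eq_of_mem_sigmaQ_one_of_not_mem_centerSL (hn : 3 ≤ n) {B : SL n}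
    {L L' : Projectivization ℂ (Fin n → ℂ)} (hL : B ∈ sigmaQ 1 L) (hL' : B ∈ sigmaQ 1 L')
    (hB : B ∉ centerSL n) : L = L' := by
  induction L using Projectivization.ind with | h v hv =>
  induction L' using Projectivization.ind with | h v' hv' =>
  obtain ⟨-, a, b, ha, hb⟩ := hL
  obtain ⟨-, a', b', ha', hb'⟩ := hL'
  rw [Projectivization.submodule_mk] at ha hb ha' hb'
  have hab : a ≠ b := by
    rintro rfl
    refine hB (mem_centerSL_of_mulVec_eq_smul (a := a) fun u => ?_)
    obtain ⟨s, hs⟩ := exists_sub_smul_mem_perp_one hv u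
    calc B.val *ᵥ u = B.val *ᵥ (s • v + (u - s • v)) := by rw [add_sub_cancel]
      _ = a • u := by
        rw [mulVec_add, ha _ (Submodule.smul_mem _ s (Submodule.mem_span_singleton_self v)),
          hb _ hs, ← smul_add, add_sub_cancel]
  have hbb' : b = b' := by
    obtain ⟨u, hu0, hu, hu'⟩ := exists_ne_zero_mem_perp_one_of_three_le hn v v'
    exact smul_left_injective ℂ hu0 ((hb u hu).symm.trans (hb' u hu'))
  obtain ⟨s, hs⟩ := exists_sub_smul_mem_perp_one hv' v
  have hv'v' : star v' ⬝ᵥ v' ≠ 0 := dotProduct_star_self_eq_zero.not.mpr hv'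
  have key : ((a - a') * s) • v' = (b - a) • (v - s • v') := by
    have h : a • v = a' • s • v' + b • (v - s • v') := by
      rw [← ha v (Submodule.mem_span_singleton_self v), hbb', ← hb' _ hs,
        ← ha' _ (Submodule.smul_mem _ s (Submodule.mem_span_singleton_self v')), ← mulVec_add,
        add_sub_cancel]
    linear_combination (norm := module) h
  have hcoef : (a - a') * s = 0 := by
    have := congrArg (star v' ⬝ᵥ ·) key
    simp only [dotProduct_smul, smul_eq_mul, mem_perp_one_span_singleton.mp hs, mul_zero] at this
    exact (mul_eq_zero.mp this).resolve_right hv'v'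
  rw [hcoef, zero_smul, eq_comm, smul_eq_zero, sub_eq_zero, sub_eq_zero] at key
  exact (Projectivization.mk_eq_mk_iff' ℂ v v' hv hv').mpr ⟨s, (key.resolve_left hab.symm).symm⟩

end CommonEigenlines

theorem exists_mulVec_eq_smul_of_mulVec_eq_smul {n : ℕ} (hn : 3 ≤ n)
    (φ : C(SL n, SUQ (1 : Matrix (Fin n) (Fin n) ℂ))) (hcen : MapsCenterOnto φ)
    {Q M : Matrix (Fin n) (Fin n) ℂ} (hQ : Q.PosDef) (hMQ : Mᴴ * M = Q)
    (hMσ : ∀ L L' : Projectivization ℂ (Fin n → ℂ), M.mulVec '' L.submodule = L'.submodule →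
      ∀ A ∈ sigmaQ Q L, (φ A).val ∈ sigmaQ 1 L')
    (hφσ : ∀ L : Projectivization ℂ (Fin n → ℂ), ∀ A ∈ sigmaQ 1 L, (φ A).val ∈ sigmaQ 1 L)
    {v : Fin n → ℂ} (hv : v ≠ 0) {μ : ℂ} (hQv : Q *ᵥ v = μ • v) :
    ∃ c : ℂ, M *ᵥ v = c • v := by
  have hQinj : Function.Injective Q.mulVec := mulVec_injective_iff_isUnit.mpr hQ.isUnit
  have hμ : μ ≠ 0 := by
    rintro rfl
    exact hv (hQinj (by rw [hQv, zero_smul, mulVec_zero]))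
  have hMv : M *ᵥ v ≠ 0 := fun h =>
    hv (hQinj (by rw [← hMQ, ← mulVec_mulVec, h, mulVec_zero, mulVec_zero]))
  obtain ⟨_, ⟨z, rfl⟩, hnc⟩ := exists_image_not_mem_centerSL (by omega) φ hcen
    (isPreconnected_range (continuous_lineRotation hv)) (centerSL_subset_range_lineRotation hv)
  have himage : M.mulVec '' (Projectivization.mk ℂ v hv).submodule =
      (Projectivization.mk ℂ (M *ᵥ v) hMv).submodule := by
    rw [Projectivization.submodule_mk, Projectivization.submodule_mk, mulVec_image_span_singleton]
  have h₁ := hMσ _ _ himage _ (lineRotation_mem_sigmaQ hQ.1 hv hμ hQv z)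
  have h₂ := hφσ _ _ (lineRotation_mem_sigmaQ isHermitian_one hv one_ne_zero
    (by rw [one_mulVec, one_smul]) z)
  obtain ⟨c, hc⟩ := (Projectivization.mk_eq_mk_iff' ℂ _ _ hMv hv).mp
    (eq_of_mem_sigmaQ_one_of_not_mem_centerSL hn h₁ h₂ hnc)
  exact ⟨c, hc.symm⟩

theorem LQ_eq_unitary_mul_polar_general (n : ℕ) (hn : 8 ≤ n)
    (φ : ContinuousMap.HomotopyEquiv (SL n) ↥(SUQ (1 : Matrix (Fin n) (Fin n) ℂ)))
    (hcen : MapsCenterOnto ⇑φ.toFun)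
    (T : HerPos n → (Fin n → ℂ) → (Fin n → ℂ))
    (hTlin : ∀ Q : HerPos n, IsLinearMap ℂ (T Q))
    (hTiso : ∀ (Q : HerPos n) (u v), form 1 (T Q u) (T Q v) = form Q.val u v)
    (hTsigma : ∀ (Q : HerPos n) (L L' : Projectivization ℂ (Fin n → ℂ)),
      T Q '' (L.submodule : Set (Fin n → ℂ)) = (L'.submodule : Set (Fin n → ℂ)) →
      ∀ A ∈ sigmaQ Q.val L, (φ.toFun A).val ∈ sigmaQ 1 L')
    (hT0 : T ⟨1, Matrix.PosDef.one⟩ = id)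
    (Q : HerPos n) (A : Matrix (Fin n) (Fin n) ℂ)
    (hAiso : ∀ u v, form 1 (A.mulVec u) (A.mulVec v) = form Q.val u v)
    (P : Matrix (Fin n) (Fin n) ℂ) (hP : P.PosDef) (hPA : P.conjTranspose * P = A.conjTranspose * A) :
    ∃ U : Matrix (Fin n) (Fin n) ℂ,
      (U.det = 1 ∧ ∀ u v, form 1 (U.mulVec u) (U.mulVec v) = form 1 u v) ∧
      (∀ L : Projectivization ℂ (Fin n → ℂ),
        T Q '' (L.submodule : Set (Fin n → ℂ))
          = (U * P).mulVec '' (L.submodule : Set (Fin n → ℂ))) ∧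
      (∀ μ : ℂ, ∃ c : ℂ, ∀ v : Fin n → ℂ, P.mulVec v = μ • v → U.mulVec v = c • v) ∧
      U * P = P * U := by
  obtain ⟨M, hM⟩ : ∃ M : Matrix (Fin n) (Fin n) ℂ, T Q = M.mulVec :=
    ⟨LinearMap.toMatrix' (hTlin Q).mk', funext fun u => by simp⟩
  have hMQ : Mᴴ * M = Q.val := conjTranspose_mul_self_eq_of_isometry (hM ▸ hTiso Q)
  have hPQ : Pᴴ * P = Q.val := hPA.trans (conjTranspose_mul_self_eq_of_isometry hAiso)
  have hφσ : ∀ L, ∀ B ∈ sigmaQ 1 L, (φ.toFun B).val ∈ sigmaQ 1 L := fun L =>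
    hTsigma ⟨1, PosDef.one⟩ L L (by rw [hT0, Set.image_id])
  have hMP : IsHomothetyOnEigenspaces M P :=
    .of_mul_self <| .of_forall_mulVec_eq_smul fun _ _ hv hPv =>
      exists_mulVec_eq_smul_of_mulVec_eq_smul (by omega) φ.toFun hcen Q.2 hMQ (hM ▸ hTsigma Q)
        hφσ hv (by rwa [← hPQ, hP.1.eq])
  have hPdet : IsUnit P.det := (isUnit_iff_isUnit_det P).mp hP.isUnit
  have : NeZero n := ⟨by omega⟩
  obtain ⟨l, hl0, hlU⟩ := exists_smul_mem_specialUnitaryGroup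
    (mul_inv_mem_unitaryGroup (hMQ.trans hPQ.symm) hPdet)
  obtain ⟨hlU, hldet⟩ := mem_specialUnitaryGroup_iff.mp hlU
  have hU : IsHomothetyOnEigenspaces (l • (M * P⁻¹)) P := (hMP.mul (.inv P)).smul l
  refine ⟨l • (M * P⁻¹), ⟨hldet, form_one_mulVec_of_mem_unitaryGroup hlU⟩, fun L => ?_, hU,
    (hU.commute hP.1).eq⟩
  rw [Matrix.smul_mul, Matrix.mul_assoc, nonsing_inv_mul _ hPdet, Matrix.mul_one, hM,
    smul_mulVec_image_submodule M hl0]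

/-- `𝓛_Q` is given, up to a unitary `U` commuting with `P` and acting as a
homothety on each eigenspace of `P`, by the polar part `P` of any linear isometry
`A : (ℂⁿ, Q) → (ℂⁿ, Q₀)` of determinant one. -/
theorem LQ_eq_unitary_mul_polar (n : ℕ) (hn : 8 ≤ n)
    (φ : ContinuousMap.HomotopyEquiv (SL n) ↥(SUQ (1 : Matrix (Fin n) (Fin n) ℂ)))
    (hcomm : PreservesComm ⇑φ.toFun) (hcen : MapsCenterOnto ⇑φ.toFun)
    (T : HerPos n → (Fin n → ℂ) → (Fin n → ℂ))
    (hTlin : ∀ Q : HerPos n, IsLinearMap ℂ (T Q))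
    (hTbij : ∀ Q : HerPos n, Function.Bijective (T Q))
    (hTiso : ∀ (Q : HerPos n) (u v), form 1 (T Q u) (T Q v) = form Q.val u v)
    (hTsigma : ∀ (Q : HerPos n) (L L' : Projectivization ℂ (Fin n → ℂ)),
      T Q '' (L.submodule : Set (Fin n → ℂ)) = (L'.submodule : Set (Fin n → ℂ)) →
      ∀ A ∈ sigmaQ Q.val L, (φ.toFun A).val ∈ sigmaQ 1 L')
    (hT0 : T ⟨1, Matrix.PosDef.one⟩ = id)
    (Q : HerPos n) (A : Matrix (Fin n) (Fin n) ℂ) (hAdet : A.det = 1)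
    (hAiso : ∀ u v, form 1 (A.mulVec u) (A.mulVec v) = form Q.val u v)
    (P : Matrix (Fin n) (Fin n) ℂ) (hP : P.PosDef) (hPA : P.conjTranspose * P = A.conjTranspose * A) :
    ∃ U : Matrix (Fin n) (Fin n) ℂ,
      (U.det = 1 ∧ ∀ u v, form 1 (U.mulVec u) (U.mulVec v) = form 1 u v) ∧
      (∀ L : Projectivization ℂ (Fin n → ℂ),
        T Q '' (L.submodule : Set (Fin n → ℂ))
          = (U * P).mulVec '' (L.submodule : Set (Fin n → ℂ))) ∧
      (∀ μ : ℂ, ∃ c : ℂ, ∀ v : Fin n → ℂ, P.mulVec v = μ • v → U.mulVec v = c • v) ∧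
      U * P = P * U :=
  LQ_eq_unitary_mul_polar_general n hn φ hcen T hTlin hTiso hTsigma hT0 Q A hAiso P hP hPA
end
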